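/- For all A, B ∈ ℝ, the Weierstrass ternary cubic form f = x³ + A·x·z² + B·z³ − y²·z satisfies the identity of ternary cubic forms H(H(f)) = 12288·(−3A)²·f + 512·(−27B)·H(f); that is, the invariants of f are I(f) = −3A and J(f) = −27B. -/

import Mathlib

open MvPolynomial

/-- The Hessian of a ternary form: the determinant of the matrix of second partials. -/
noncomputable def hess {R : Type*} [CommRing R] (f : MvPolynomial (Fin 3) R) :
    MvPolynomial (Fin 3) R :=
  Matrix.det (Matrix.of fun i j => pderiv i (pderiv j f))

/-- The exponent vectors of the ten monomials of a ternary cubic form. -/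
def expo : Fin 10 → Fin 3 → ℕ :=
  ![![3,0,0], ![0,3,0], ![0,0,3], ![2,1,0], ![2,0,1],
    ![1,2,0], ![0,2,1], ![1,0,2], ![0,1,2], ![1,1,1]]

/-- The ternary cubic form with coefficient vector `c : Fin 10 → R`. -/
noncomputable def cubic {R : Type*} [CommRing R] (c : Fin 10 → R) : MvPolynomial (Fin 3) R :=
  ∑ k : Fin 10, C (c k) * ∏ i : Fin 3, X i ^ expo k i

/-- The coefficient vector of the Weierstrass cubic `x³ + A·x·z² + B·z³ − y²·z`. -/
noncomputable def wcoeffs {R : Type*} [CommRing R] (A B : R) : Fin 10 → R :=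
  ![1, 0, B, 0, 0, 0, -1, A, 0, 0]

@[simp]
theorem MvPolynomial.pderiv_ofNat {R σ : Type*} [CommSemiring R] (i : σ) (n : ℕ) [n.AtLeastTwo] :
    pderiv i (no_index (OfNat.ofNat n) : MvPolynomial σ R) = 0 :=
  (pderiv i).map_natCast n

namespace Weierstrass

variable {R : Type*} [CommRing R]

noncomputable def cubicForm (A B : R) : MvPolynomial (Fin 3) R :=
  X 0 ^ 3 + C A * X 0 * X 2 ^ 2 + C B * X 2 ^ 3 - X 1 ^ 2 * X 2

noncomputable def hessianForm (A B : R) : MvPolynomial (Fin 3) R :=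
  -8 * (3 * C A * X 0 ^ 2 * X 2 + 3 * X 0 * X 1 ^ 2 + 9 * C B * X 0 * X 2 ^ 2 - C A ^ 2 * X 2 ^ 3)

theorem cubic_wcoeffs (A B : R) : cubic (wcoeffs A B) = cubicForm A B := by
  simp only [cubic, wcoeffs, expo, Matrix.cons_val', Matrix.cons_val_fin_one, Fin.prod_univ_succ,
    Matrix.cons_val_zero, Matrix.cons_val_succ, Fin.succ_zero_eq_one, Finset.univ_unique,
    Fin.default_eq_zero, Finset.prod_singleton, Fin.succ_one_eq_two, Fin.sum_univ_succ, C_1, pow_zero,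
    mul_one, one_mul, C_0, zero_mul, pow_one, C_neg, neg_mul, Finset.sum_const_zero, add_zero, zero_add,
    cubicForm]
  ring

theorem hess_cubicForm (A B : R) : hess (cubicForm A B) = hessianForm A B := by
  simp only [hess, Matrix.det_fin_three, Matrix.of_apply, cubicForm, hessianForm, map_add, map_sub,
    map_zero, Derivation.leibniz, Derivation.leibniz_pow, derivation_C, Derivation.map_natCast,
    Derivation.map_one_eq_zero, pderiv_X, Pi.single_apply, Fin.reduceEq, ↓reduceIte, smul_eq_mul,
    nsmul_eq_mul, mul_zero, zero_mul, add_zero, zero_add, mul_one, sub_zero, Nat.add_one_sub_one, pow_one]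
  ring

theorem hess_hessianForm (A B : R) :
    hess (hessianForm A B) =
      12288 * C (-3 * A) ^ 2 * cubicForm A B + 512 * C (-27 * B) * hessianForm A B := by
  simp only [hess, Matrix.det_fin_three, Matrix.of_apply, cubicForm, hessianForm, map_add, map_sub,
    map_neg, map_zero, Derivation.leibniz, Derivation.leibniz_pow, derivation_C, Derivation.map_natCast,
    Derivation.map_one_eq_zero, pderiv_ofNat, pderiv_X, Pi.single_apply, Fin.reduceEq, ↓reduceIte,
    smul_eq_mul, nsmul_eq_mul, mul_zero, zero_mul, add_zero, zero_add, mul_one, sub_zero,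
    Nat.add_one_sub_one, pow_one, C_mul, map_ofNat C]
  ring

end Weierstrass

/-- For all `A, B ∈ ℝ`, the Weierstrass ternary cubic form `f = x³ + A·x·z² + B·z³ − y²·z`
satisfies `H(H(f)) = 12288·(−3A)²·f + 512·(−27B)·H(f)`; that is, `I(f) = −3A` and
`J(f) = −27B`. -/
theorem stmt2 (A B : ℝ) :
    hess (hess (cubic (wcoeffs A B))) =
      12288 * C ((-3 * A)) ^ 2 * cubic (wcoeffs A B)
        + 512 * C (-27 * B) * hess (cubic (wcoeffs A B)) := by
  rw [Weierstrass.cubic_wcoeffs, Weierstrass.hess_cubicForm, Weierstrass.hess_hessianForm]
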